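/- arXiv:math/0610154 — 2 statements merged into one kernel-verified Lean document; each statement's English description precedes it below -/
import Mathlib

section
/- If 1 ≤ N ≤ N' ≤ ∞ then DC_{N'} ⊆ DC_N; consequently, if a compact measured length space (X,d,ν) has nonnegative N-Ricci curvature (displacement convexity of U_ν for all U ∈ DC_N along some Wasserstein geodesic), then it has nonnegative N'-Ricci curvature. -/
/-!
Since `U` is convex with `U 0 = 0`, the slope `U r / r` is nondecreasing, so `φ s = s * U s⁻¹`
is nonincreasing on `(0, ∞)`. The `DC_N` condition says that `l ↦ φ (l ^ N)` is convex, and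
`DC_∞` that `l ↦ φ (exp l)` is. For `N ≤ N'` write `l ^ N = (l ^ (N / N')) ^ N'`, resp.
`l ^ N = exp (N * log l)`: the inner maps are concave, and a nonincreasing convex function of a
concave function is convex. The curvature statement follows since `DC_{N'} ⊆ DC_N`.
-/

open MeasureTheory Set Filter
open scoped ENNReal

variable {X : Type*} [MetricSpace X] [CompactSpace X] [MeasurableSpace X] [BorelSpace X]

/-- A transference plan (coupling) between two measures. -/
def IsCoupling (π : Measure (X × X)) (μ₀ μ₁ : Measure X) : Prop :=
  π.map Prod.fst = μ₀ ∧ π.map Prod.snd = μ₁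

/-- Square of the quadratic Wasserstein distance. -/
noncomputable def W2sq (μ₀ μ₁ : Measure X) : ℝ≥0∞ :=
  ⨅ (π : Measure (X × X)) (_ : IsCoupling π μ₀ μ₁),
    ∫⁻ p, ENNReal.ofReal (dist p.1 p.2 ^ 2) ∂π

/-- The quadratic Wasserstein distance. -/
noncomputable def W2 (μ₀ μ₁ : Measure X) : ℝ :=
  Real.sqrt (W2sq μ₀ μ₁).toReal


/-- `U'(∞) = lim_{r→∞} U(r)/r` (as a limsup, which equals the limit for convex `U`). -/
noncomputable def UprimeInf (U : ℝ → ℝ) : EReal :=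
  Filter.limsup (fun r : ℝ => ((U r / r : ℝ) : EReal)) Filter.atTop

/-- The positive part of an extended real number, as an extended nonnegative real. -/
noncomputable def EReal.posPart' (e : EReal) : ℝ≥0∞ :=
  if e = ⊤ then ⊤ else ENNReal.ofReal e.toReal

/-- The entropy functional `U_ν(μ) = ∫_X U(ρ) dν + U'(∞) μ_s(X)`, where `μ = ρ ν + μ_s`
is the Lebesgue decomposition of `μ` with respect to `ν`.  It takes values in the extended
reals; for the functionals of interest the value lies in `ℝ ∪ {+∞}`. -/
noncomputable def ent {Z : Type*} [MeasurableSpace Z] (U : ℝ → ℝ) (μ ν : Measure Z) : EReal :=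
  ((∫⁻ x, ENNReal.ofReal (U ((μ.rnDeriv ν x).toReal)) ∂ν : ℝ≥0∞) : EReal)
    - ((∫⁻ x, ENNReal.ofReal (-(U ((μ.rnDeriv ν x).toReal))) ∂ν : ℝ≥0∞) : EReal)
    + UprimeInf U * ((μ.singularPart ν Set.univ : ℝ≥0∞) : EReal)

/-- The displacement convexity class `DC_N`, for `N ∈ [1, ∞]`. -/
def DC (N : ℝ≥0∞) (U : ℝ → ℝ) : Prop :=
  ContinuousOn U (Set.Ici 0) ∧ ConvexOn ℝ (Set.Ici 0) U ∧ U 0 = 0 ∧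
    (if N = ∞ then ConvexOn ℝ Set.univ (fun l : ℝ => Real.exp l * U (Real.exp (-l)))
     else ConvexOn ℝ (Set.Ioi 0) (fun l : ℝ => l ^ N.toReal * U (l ^ (-N.toReal))))

/-- A metric space is a (compact) length space iff any two points are joined by a minimizing
constant-speed geodesic. -/
def GeodesicMetricSpace (Y : Type*) [MetricSpace Y] : Prop :=
  ∀ x y : Y, ∃ γ : ℝ → Y, γ 0 = x ∧ γ 1 = y ∧
    ∀ s ∈ Set.Icc (0:ℝ) 1, ∀ t ∈ Set.Icc (0:ℝ) 1,
      dist (γ s) (γ t) = |s - t| * dist x y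

/-- A (constant-speed, minimizing) Wasserstein geodesic from `μ₀` to `μ₁`. -/
def IsW2Geodesic {X : Type*} [MetricSpace X] [CompactSpace X] [MeasurableSpace X] [BorelSpace X]
    (Γ : ℝ → ProbabilityMeasure X) (μ₀ μ₁ : ProbabilityMeasure X) : Prop :=
  Γ 0 = μ₀ ∧ Γ 1 = μ₁ ∧ ∀ s ∈ Set.Icc (0:ℝ) 1, ∀ t ∈ Set.Icc (0:ℝ) 1,
    W2 (Γ s : Measure X) (Γ t : Measure X) = |s - t| * W2 (μ₀ : Measure X) (μ₁ : Measure X)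

/-- The support of a measure on a metric space. -/
def mSupp {X : Type*} [MetricSpace X] [MeasurableSpace X] (ν : Measure X) : Set X :=
  {x | ∀ r > 0, 0 < ν (Metric.ball x r)}

/-- `(X, d, ν)` has nonnegative `N`-Ricci curvature: for any two probability measures
supported in `supp ν` there is some Wasserstein geodesic joining them along which the
entropy `U_ν` is convex, for every `U ∈ DC_N` simultaneously. -/
def NonnegRicci {X : Type*} [MetricSpace X] [CompactSpace X] [MeasurableSpace X] [BorelSpace X]
    (N : ℝ≥0∞) (ν : Measure X) : Prop :=
  ∀ μ₀ μ₁ : ProbabilityMeasure X,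
    (μ₀ : Measure X) (mSupp ν)ᶜ = 0 → (μ₁ : Measure X) (mSupp ν)ᶜ = 0 →
    ∃ Γ : ℝ → ProbabilityMeasure X, IsW2Geodesic Γ μ₀ μ₁ ∧
      ∀ U : ℝ → ℝ, DC N U → ∀ t ∈ Set.Icc (0:ℝ) 1,
        ent U (Γ t : Measure X) ν
          ≤ ((t : ℝ) : EReal) * ent U (μ₁ : Measure X) ν
            + ((1 - t : ℝ) : EReal) * ent U (μ₀ : Measure X) ν

theorem antitoneOn_mul_apply_inv {U : ℝ → ℝ} (hU : ConvexOn ℝ (Ici 0) U) (h0 : U 0 = 0) :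
    AntitoneOn (fun s : ℝ => s * U s⁻¹) (Ioi 0) := by
  intro a ha b hb hab
  have hslope : (U b⁻¹ - U 0) / (b⁻¹ - 0) ≤ (U a⁻¹ - U 0) / (a⁻¹ - 0) :=
    hU.secant_mono self_mem_Ici (mem_Ici.2 (inv_pos.2 hb).le) (mem_Ici.2 (inv_pos.2 ha).le)
      (inv_pos.2 hb).ne' (inv_pos.2 ha).ne' (inv_anti₀ ha hab)
  simpa [h0, div_eq_mul_inv, mul_comm] using hslope

theorem ConvexOn.comp_concaveOn_of_mapsTo {s t : Set ℝ} {g f : ℝ → ℝ} (hg : ConvexOn ℝ t g)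
    (hg' : AntitoneOn g t) (hf : ConcaveOn ℝ s f) (hst : MapsTo f s t) :
    ConvexOn ℝ s (g ∘ f) := by
  refine ⟨hf.1, fun x hx y hy a b ha hb hab => ?_⟩
  calc g (f (a • x + b • y)) ≤ g (a • f x + b • f y) :=
        hg' (hg.1 (hst hx) (hst hy) ha hb hab) (hst (hf.1 hx hy ha hb hab))
          (hf.2 hx hy ha hb hab)
    _ ≤ a • g (f x) + b • g (f y) := hg.2 (hst hx) (hst hy) ha hb hab

section DisplacementConvexity

variable {U : ℝ → ℝ}

theorem antitoneOn_rpow_mul_apply_rpow_neg (hU : ConvexOn ℝ (Ici 0) U) (h0 : U 0 = 0)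
    {q : ℝ} (hq : 0 < q) : AntitoneOn (fun l : ℝ => l ^ q * U (l ^ (-q))) (Ioi 0) := by
  intro a ha b hb hab
  simp only [Real.rpow_neg (le_of_lt ha), Real.rpow_neg (le_of_lt hb)]
  exact antitoneOn_mul_apply_inv hU h0 (Real.rpow_pos_of_pos ha q) (Real.rpow_pos_of_pos hb q)
    (Real.rpow_le_rpow (le_of_lt ha) hab hq.le)

theorem antitone_exp_mul_apply_exp_neg (hU : ConvexOn ℝ (Ici 0) U) (h0 : U 0 = 0) :
    Antitone (fun l : ℝ => Real.exp l * U (Real.exp (-l))) := by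
  intro a b hab
  simp only [Real.exp_neg]
  exact antitoneOn_mul_apply_inv hU h0 (Real.exp_pos a) (Real.exp_pos b) (Real.exp_le_exp.2 hab)

theorem ConvexOn.rpow_mul_apply_rpow_neg_of_le (hU : ConvexOn ℝ (Ici 0) U) (h0 : U 0 = 0)
    {p q : ℝ} (hp : 0 ≤ p) (hpq : p ≤ q) (hq : 0 < q)
    (h : ConvexOn ℝ (Ioi 0) (fun l : ℝ => l ^ q * U (l ^ (-q)))) :
    ConvexOn ℝ (Ioi 0) (fun l : ℝ => l ^ p * U (l ^ (-p))) := by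
  have hconc : ConcaveOn ℝ (Ioi 0) (fun l : ℝ => l ^ (p / q)) :=
    (Real.concaveOn_rpow (div_nonneg hp hq.le) (div_le_one_of_le₀ hpq hq.le)).subset
      Ioi_subset_Ici_self (convex_Ioi 0)
  refine (h.comp_concaveOn_of_mapsTo (antitoneOn_rpow_mul_apply_rpow_neg hU h0 hq) hconc
    fun l hl => Real.rpow_pos_of_pos hl _).congr fun l hl => ?_
  simp only [Function.comp_apply, ← Real.rpow_mul (le_of_lt hl),
    div_mul_cancel₀ _ hq.ne', mul_neg]

theorem ConvexOn.rpow_mul_apply_rpow_neg_of_exp (hU : ConvexOn ℝ (Ici 0) U) (h0 : U 0 = 0)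
    {p : ℝ} (hp : 0 ≤ p) (h : ConvexOn ℝ univ (fun l : ℝ => Real.exp l * U (Real.exp (-l)))) :
    ConvexOn ℝ (Ioi 0) (fun l : ℝ => l ^ p * U (l ^ (-p))) := by
  have hconc : ConcaveOn ℝ (Ioi 0) (fun l : ℝ => p * Real.log l) := by
    simpa only [smul_eq_mul] using strictConcaveOn_log_Ioi.concaveOn.smul hp
  refine (h.comp_concaveOn_of_mapsTo ((antitone_exp_mul_apply_exp_neg hU h0).antitoneOn _)
    hconc (mapsTo_univ _ _)).congr fun l hl => ?_
  simp only [Function.comp_apply, Real.rpow_def_of_pos hl, mul_comm (Real.log l), neg_mul]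

theorem DC.of_le {N N' : ℝ≥0∞} (hNN' : N ≤ N') (hU : DC N' U) : DC N U := by
  obtain rfl | hlt := hNN'.eq_or_lt
  · exact hU
  obtain ⟨hcont, hconv, h0, hN'⟩ := hU
  refine ⟨hcont, hconv, h0, ?_⟩
  rw [if_neg hlt.ne_top]
  by_cases hN'top : N' = ∞
  · rw [if_pos hN'top] at hN'
    exact hconv.rpow_mul_apply_rpow_neg_of_exp h0 ENNReal.toReal_nonneg hN'
  · rw [if_neg hN'top] at hN'
    exact hconv.rpow_mul_apply_rpow_neg_of_le h0 ENNReal.toReal_nonneg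
      (ENNReal.toReal_mono hN'top hNN') (ENNReal.toReal_pos (hlt.ne_bot) hN'top) hN'

end DisplacementConvexity

theorem NonnegRicci.mono {N N' : ℝ≥0∞} {ν : Measure X} (hN : NonnegRicci N ν) (hNN' : N ≤ N') :
    NonnegRicci N' ν := by
  intro μ₀ μ₁ hμ₀ hμ₁
  obtain ⟨Γ, hΓ, hconv⟩ := hN μ₀ μ₁ hμ₀ hμ₁
  exact ⟨Γ, hΓ, fun U hU => hconv U (hU.of_le hNN')⟩

theorem stmt11_general (N N' : ℝ≥0∞) (hNN' : N ≤ N') :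
    (∀ U : ℝ → ℝ, DC N' U → DC N U) ∧
    (∀ (ν : Measure X), IsProbabilityMeasure ν → GeodesicMetricSpace X →
      NonnegRicci N ν → NonnegRicci N' ν) :=
  ⟨fun _ => DC.of_le hNN', fun _ _ _ hN => hN.mono hNN'⟩

/-- If `1 ≤ N ≤ N' ≤ ∞` then `DC_{N'} ⊆ DC_N`; consequently nonnegative `N`-Ricci curvature
implies nonnegative `N'`-Ricci curvature. -/
theorem stmt11 (N N' : ℝ≥0∞) (h1 : 1 ≤ N) (hNN' : N ≤ N') :
    (∀ U : ℝ → ℝ, DC N' U → DC N U) ∧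
    (∀ (ν : Measure X), IsProbabilityMeasure ν → GeodesicMetricSpace X →
      NonnegRicci N ν → NonnegRicci N' ν) :=
  stmt11_general N N' hNN'
end

section
/- Bishop–Gromov inequality for measured length spaces: if a compact measured length space (X,d,ν) has nonnegative N-Ricci curvature for some N ∈ [1,∞), then for all x ∈ supp(ν) and all 0 < r₁ ≤ r₂, one has ν(B_{r₂}(x)) ≤ (r₂/r₁)^N ν(B_{r₁}(x)). -/
open MeasureTheory Set Filter
open scoped ENNReal NNReal Topology

variable {X : Type*} [MetricSpace X] [CompactSpace X] [MeasurableSpace X] [BorelSpace X]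

set_option linter.unusedSectionVars false
set_option maxHeartbeats 1000000

lemma isCoupling_prod (μ μ' : Measure X) [IsProbabilityMeasure μ] [IsProbabilityMeasure μ'] :
    IsCoupling (μ.prod μ') μ μ' := by
  constructor
  · rw [show (μ.prod μ').map Prod.fst = (μ.prod μ').fst from rfl, Measure.fst_prod]
  · rw [show (μ.prod μ').map Prod.snd = (μ.prod μ').snd from rfl, Measure.snd_prod]

lemma IsCoupling.prob {π : Measure (X × X)} {μ μ' : Measure X} (h : IsCoupling π μ μ')
    [IsProbabilityMeasure μ] : IsProbabilityMeasure π := by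
  constructor
  have h2 : π (Prod.fst ⁻¹' (Set.univ : Set X)) = μ Set.univ := by
    rw [← h.1, Measure.map_apply measurable_fst MeasurableSet.univ]
  simpa [measure_univ] using h2

lemma IsCoupling.lintegral_fst {π : Measure (X × X)} {μ μ' : Measure X}
    (h : IsCoupling π μ μ') {f : X → ℝ≥0∞} (hf : Measurable f) :
    ∫⁻ p, f p.1 ∂π = ∫⁻ y, f y ∂μ := by
  rw [← h.1, lintegral_map hf measurable_fst]

lemma IsCoupling.lintegral_snd {π : Measure (X × X)} {μ μ' : Measure X}
    (h : IsCoupling π μ μ') {f : X → ℝ≥0∞} (hf : Measurable f) :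
    ∫⁻ p, f p.2 ∂π = ∫⁻ y, f y ∂μ' := by
  rw [← h.2, lintegral_map hf measurable_snd]

lemma IsCoupling.meas_fst {π : Measure (X × X)} {μ μ' : Measure X}
    (h : IsCoupling π μ μ') {s : Set X} (hs : MeasurableSet s) :
    π (Prod.fst ⁻¹' s) = μ s := by
  rw [← h.1, Measure.map_apply measurable_fst hs]

lemma IsCoupling.meas_snd {π : Measure (X × X)} {μ μ' : Measure X}
    (h : IsCoupling π μ μ') {s : Set X} (hs : MeasurableSet s) :
    π (Prod.snd ⁻¹' s) = μ' s := by
  rw [← h.2, Measure.map_apply measurable_snd hs]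

lemma W2sq_le_cost {π : Measure (X × X)} {μ μ' : Measure X} (h : IsCoupling π μ μ') :
    W2sq μ μ' ≤ ∫⁻ p, ENNReal.ofReal (dist p.1 p.2 ^ 2) ∂π :=
  iInf₂_le π h

lemma cost_le_diam {π : Measure (X × X)} {μ μ' : Measure X} (h : IsCoupling π μ μ')
    [IsProbabilityMeasure μ] :
    ∫⁻ p, ENNReal.ofReal (dist p.1 p.2 ^ 2) ∂π
      ≤ ENNReal.ofReal (Metric.diam (Set.univ : Set X) ^ 2) := by
  have := h.prob
  calc ∫⁻ p, ENNReal.ofReal (dist p.1 p.2 ^ 2) ∂π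
      ≤ ∫⁻ _, ENNReal.ofReal (Metric.diam (Set.univ : Set X) ^ 2) ∂π := by
        refine lintegral_mono fun p => ENNReal.ofReal_le_ofReal ?_
        have hd : dist p.1 p.2 ≤ Metric.diam (Set.univ : Set X) :=
          Metric.dist_le_diam_of_mem isCompact_univ.isBounded trivial trivial
        exact pow_le_pow_left₀ dist_nonneg hd 2
    _ = ENNReal.ofReal (Metric.diam (Set.univ : Set X) ^ 2) := by
        simp [lintegral_const]

lemma W2sq_ne_top (μ μ' : Measure X) [IsProbabilityMeasure μ] [IsProbabilityMeasure μ'] :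
    W2sq μ μ' ≠ ⊤ :=
  ne_top_of_le_ne_top ENNReal.ofReal_ne_top
    ((W2sq_le_cost (isCoupling_prod μ μ')).trans (cost_le_diam (isCoupling_prod μ μ')))

lemma W2_nonneg (μ μ' : Measure X) : 0 ≤ W2 μ μ' := Real.sqrt_nonneg _

lemma W2sq_eq (μ μ' : Measure X) [IsProbabilityMeasure μ] [IsProbabilityMeasure μ'] :
    W2sq μ μ' = ENNReal.ofReal (W2 μ μ' ^ 2) := by
  rw [W2, Real.sq_sqrt ENNReal.toReal_nonneg, ENNReal.ofReal_toReal (W2sq_ne_top μ μ')]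

lemma exists_coupling_cost_lt (μ μ' : Measure X) [IsProbabilityMeasure μ]
    [IsProbabilityMeasure μ'] {ε : ℝ} (hε : 0 < ε) :
    ∃ π : Measure (X × X), IsCoupling π μ μ' ∧
      ∫⁻ p, ENNReal.ofReal (dist p.1 p.2 ^ 2) ∂π < W2sq μ μ' + ENNReal.ofReal ε := by
  have hlt : W2sq μ μ' < W2sq μ μ' + ENNReal.ofReal ε :=
    ENNReal.lt_add_right (W2sq_ne_top μ μ') (by simpa using hε)
  rw [W2sq, iInf_lt_iff] at hlt
  obtain ⟨π, hπ⟩ := hlt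
  rw [iInf_lt_iff] at hπ
  obtain ⟨hc, hlt⟩ := hπ
  exact ⟨π, hc, hlt⟩

lemma cost_coupling_dirac {π : Measure (X × X)} {μ : Measure X} {x : X}
    (h : IsCoupling π (Measure.dirac x) μ) :
    ∫⁻ p, ENNReal.ofReal (dist p.1 p.2 ^ 2) ∂π = ∫⁻ y, ENNReal.ofReal (dist x y ^ 2) ∂μ := by
  have hae : ∀ᵐ p ∂π, p.1 = x := by
    have : π (Prod.fst ⁻¹' ({x}ᶜ : Set X)) = 0 := by
      rw [h.meas_fst (MeasurableSet.singleton x).compl]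
      simp [Measure.dirac_apply' _ (MeasurableSet.singleton x).compl]
    filter_upwards [measure_eq_zero_iff_ae_notMem.mp this] with p hp
    simpa using hp
  calc ∫⁻ p, ENNReal.ofReal (dist p.1 p.2 ^ 2) ∂π
      = ∫⁻ p, ENNReal.ofReal (dist x p.2 ^ 2) ∂π := by
        refine lintegral_congr_ae ?_
        filter_upwards [hae] with p hp; rw [hp]
    _ = ∫⁻ y, ENNReal.ofReal (dist x y ^ 2) ∂μ :=
        h.lintegral_snd (f := fun y => ENNReal.ofReal (dist x y ^ 2)) (by fun_prop)

lemma W2sq_dirac (x : X) (μ : Measure X) [IsProbabilityMeasure μ] :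
    W2sq (Measure.dirac x) μ = ∫⁻ y, ENNReal.ofReal (dist x y ^ 2) ∂μ := by
  refine le_antisymm ?_ (le_iInf₂ fun π hπ => (cost_coupling_dirac hπ).ge)
  calc W2sq (Measure.dirac x) μ
      ≤ ∫⁻ p, ENNReal.ofReal (dist p.1 p.2 ^ 2) ∂((Measure.dirac x).prod μ) :=
        W2sq_le_cost (isCoupling_prod _ _)
    _ = _ := cost_coupling_dirac (isCoupling_prod _ _)

/-- Quantitative step of the concentration argument, for a fixed near-optimal coupling. -/
lemma concentration_step {μt μ₁ : Measure X} [IsProbabilityMeasure μt] [IsProbabilityMeasure μ₁]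
    (x : X) (r₂ t δ η : ℝ) (ht0 : 0 < t) (ht1 : t < 1) (hδ : 0 < δ) (hη0 : 0 < η) (hη1 : η ≤ 1)
    (hWt : W2 (Measure.dirac x) μt = t * W2 (Measure.dirac x) μ₁)
    (hWt1 : W2 μt μ₁ = (1 - t) * W2 (Measure.dirac x) μ₁)
    (hμ₁ : μ₁ {z | r₂ ≤ dist x z} = 0) :
    (μt {y | t * r₂ + δ ≤ dist x y}).toReal
      ≤ (t * η^4 + 2*t*(Metric.diam (Set.univ : Set X))*((t/(1-t)+1)*η^3 + η/4)) / δ^2 := by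
  set W : ℝ := W2 (Measure.dirac x) μ₁ with hWdef
  have hW0 : 0 ≤ W := W2_nonneg _ _
  set D : ℝ := Metric.diam (Set.univ : Set X) with hDdef
  have hD0 : (0:ℝ) ≤ D := Metric.diam_nonneg
  set ε : ℝ := η^4 with hεdef
  have hε0 : 0 < ε := by positivity
  obtain ⟨π, hπ, hcost⟩ := exists_coupling_cost_lt μt μ₁ hε0
  have : IsProbabilityMeasure π := hπ.prob
  set F : X × X → ℝ := fun p => dist x p.1 with hF
  set G : X × X → ℝ := fun p => dist p.1 p.2 with hG
  set H : X × X → ℝ := fun p => dist x p.2 with hH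
  have hFc : Continuous F := continuous_const.dist continuous_fst
  have hGc : Continuous G := continuous_fst.dist continuous_snd
  have hHc : Continuous H := continuous_const.dist continuous_snd
  have hint : ∀ {f : X × X → ℝ}, Continuous f → Integrable f π := fun hf =>
    hf.integrable_of_hasCompactSupport (isClosed_tsupport _).isCompact
  -- pointwise facts
  have hF0 : ∀ p, 0 ≤ F p := fun p => dist_nonneg
  have hG0 : ∀ p, 0 ≤ G p := fun p => dist_nonneg
  have hH0 : ∀ p, 0 ≤ H p := fun p => dist_nonneg
  have hFD : ∀ p, F p ≤ D := fun p =>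
    Metric.dist_le_diam_of_mem isCompact_univ.isBounded trivial trivial
  have htri : ∀ p, H p ≤ F p + G p := fun p => dist_triangle x p.1 p.2
  -- integral values
  have key : ∀ (y : X) (μ : Measure X) [IsProbabilityMeasure μ],
      ∫⁻ z, ENNReal.ofReal (dist y z ^ 2) ∂μ = ENNReal.ofReal (W2 (Measure.dirac y) μ ^ 2) := by
    intro y μ _
    rw [← W2sq_dirac, W2sq_eq]
  have bochner : ∀ (f : X × X → ℝ), Continuous f → (∀ p, 0 ≤ f p) →
      ENNReal.ofReal (∫ p, f p ∂π) = ∫⁻ p, ENNReal.ofReal (f p) ∂π := fun f hf h0 =>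
    ofReal_integral_eq_lintegral_ofReal (hint hf) (Filter.Eventually.of_forall h0)
  have iF2 : ∫ p, F p ^ 2 ∂π = (t*W)^2 := by
    have h1 : ∫⁻ p, ENNReal.ofReal (F p ^ 2) ∂π = ENNReal.ofReal ((t*W)^2) := by
      rw [show (fun p : X × X => ENNReal.ofReal (F p ^2)) = (fun p => (fun y => ENNReal.ofReal (dist x y ^ 2)) p.1) from rfl]
      rw [hπ.lintegral_fst (f := fun y => ENNReal.ofReal (dist x y ^ 2)) (by fun_prop)]
      rw [key x μt, hWt, hWdef]
    rw [← bochner _ (by continuity) (fun p => sq_nonneg _)] at h1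
    exact (ENNReal.ofReal_eq_ofReal_iff (integral_nonneg fun p => sq_nonneg (F p)) (by positivity)).mp h1
  have iH2 : ∫ p, H p ^ 2 ∂π = W^2 := by
    have h1 : ∫⁻ p, ENNReal.ofReal (H p ^ 2) ∂π = ENNReal.ofReal (W^2) := by
      rw [show (fun p : X × X => ENNReal.ofReal (H p ^2)) = (fun p => (fun y => ENNReal.ofReal (dist x y ^ 2)) p.2) from rfl]
      rw [hπ.lintegral_snd (f := fun y => ENNReal.ofReal (dist x y ^ 2)) (by fun_prop)]
      rw [key x μ₁, hWdef]
    rw [← bochner _ (by continuity) (fun p => sq_nonneg _)] at h1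
    exact (ENNReal.ofReal_eq_ofReal_iff (integral_nonneg fun p => sq_nonneg (H p)) (by positivity)).mp h1
  have iG2 : ∫ p, G p ^ 2 ∂π ≤ ((1-t)*W)^2 + ε := by
    have h1 : ∫⁻ p, ENNReal.ofReal (G p ^ 2) ∂π ≤ ENNReal.ofReal (((1-t)*W)^2 + ε) := by
      rw [ENNReal.ofReal_add (by positivity) hε0.le]
      refine le_of_lt ?_
      calc ∫⁻ p, ENNReal.ofReal (G p ^ 2) ∂π < W2sq μt μ₁ + ENNReal.ofReal ε := hcost
        _ = ENNReal.ofReal (((1-t)*W)^2) + ENNReal.ofReal ε := by rw [W2sq_eq, hWt1, hWdef]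
    rw [← bochner _ (by continuity) (fun p => sq_nonneg _)] at h1
    exact (ENNReal.ofReal_le_ofReal_iff (by positivity)).mp h1
  have h1t : (0:ℝ) < 1 - t := by linarith
  -- integrability of everything in sight
  have iF2i : Integrable (fun p => F p ^ 2) π := hint (hFc.pow 2)
  have iG2i : Integrable (fun p => G p ^ 2) π := hint (hGc.pow 2)
  have iH2i : Integrable (fun p => H p ^ 2) π := hint (hHc.pow 2)
  have iFGi : Integrable (fun p => F p * G p) π := hint (hFc.mul hGc)
  have iFHi : Integrable (fun p => F p * H p) π := hint (hFc.mul hHc)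
  have iui : Integrable (fun p => F p + G p - H p) π := hint ((hFc.add hGc).sub hHc)
  have iu2i : Integrable (fun p => (F p + G p - H p) ^ 2) π :=
    hint (((hFc.add hGc).sub hHc).pow 2)
  have iFtH2i : Integrable (fun p => (F p - t * H p) ^ 2) π :=
    hint ((hFc.sub (continuous_const.mul hHc)).pow 2)
  have i1 : Integrable (fun p => F p ^ 2 + 2*(F p * G p)) π :=
    iF2i.add (iFGi.const_mul 2)
  have i2 : Integrable (fun p => F p ^ 2 + 2*(F p * G p) + G p ^ 2) π := i1.add iG2i
  -- linearity expansion
  have e1 : ∫ p, (F p ^ 2 + 2*(F p * G p) + G p ^ 2 - H p ^ 2) ∂π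
      = (∫ p, F p ^ 2 ∂π) + 2*(∫ p, F p * G p ∂π) + (∫ p, G p ^ 2 ∂π) - ∫ p, H p ^ 2 ∂π := by
    have h1 : ∫ p, (F p ^ 2 + 2*(F p * G p) + G p ^ 2 - H p ^ 2) ∂π
        = (∫ p, (F p ^ 2 + 2*(F p * G p) + G p ^ 2) ∂π) - ∫ p, H p ^ 2 ∂π :=
      integral_sub i2 iH2i
    have h2 : ∫ p, (F p ^ 2 + 2*(F p * G p) + G p ^ 2) ∂π
        = (∫ p, (F p ^ 2 + 2*(F p * G p)) ∂π) + ∫ p, G p ^ 2 ∂π := integral_add i1 iG2i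
    have h3 : ∫ p, (F p ^ 2 + 2*(F p * G p)) ∂π
        = (∫ p, F p ^ 2 ∂π) + ∫ p, 2*(F p * G p) ∂π := integral_add iF2i (iFGi.const_mul 2)
    have h4 : ∫ p, 2*(F p * G p) ∂π = 2*(∫ p, F p * G p ∂π) := integral_const_mul 2 _
    rw [h1, h2, h3, h4]
  -- lower bound on ∫ F G
  have k1 : (0:ℝ) ≤ ∫ p, (F p ^ 2 + 2*(F p * G p) + G p ^ 2 - H p ^ 2) ∂π :=
    integral_nonneg fun p => by
      simp only [Pi.zero_apply]; nlinarith [htri p, hH0 p, hF0 p, hG0 p]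
  have hFG_lb : t*(1-t)*W^2 - ε/2 ≤ ∫ p, F p * G p ∂π := by
    rw [e1] at k1; nlinarith [k1, iF2, iH2, iG2]
  -- upper bound on ∫ F G
  have M : 2*(t*(1-t))*(∫ p, F p * G p ∂π) ≤ (1-t)^2*((t*W)^2) + t^2*(((1-t)*W)^2 + ε) := by
    have pt : ∀ p : X × X, 2*(t*(1-t))*(F p * G p) ≤ (1-t)^2*F p ^2 + t^2*G p ^2 := fun p => by
      nlinarith [sq_nonneg ((1-t)*F p - t*G p)]
    have hmono : ∫ p, 2*(t*(1-t))*(F p * G p) ∂π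
        ≤ ∫ p, ((1-t)^2*F p ^2 + t^2*G p ^2) ∂π :=
      integral_mono (iFGi.const_mul _) ((iF2i.const_mul _).add (iG2i.const_mul _)) pt
    have ea : ∫ p, 2*(t*(1-t))*(F p * G p) ∂π = 2*(t*(1-t))*(∫ p, F p * G p ∂π) :=
      integral_const_mul _ _
    have eb : ∫ p, ((1-t)^2*F p ^2 + t^2*G p ^2) ∂π
        = (1-t)^2*(∫ p, F p ^2 ∂π) + t^2*(∫ p, G p ^2 ∂π) := by
      have := integral_add (iF2i.const_mul ((1-t)^2)) (iG2i.const_mul (t^2))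
      rw [this, integral_const_mul, integral_const_mul]
    rw [ea, eb] at hmono
    rw [iF2] at hmono
    exact hmono.trans (add_le_add le_rfl (mul_le_mul_of_nonneg_left iG2 (sq_nonneg t)))
  have hFG_ub : 2*(∫ p, F p * G p ∂π) ≤ 2*t*(1-t)*W^2 + (t/(1-t))*ε := by
    rw [← mul_le_mul_iff_of_pos_right (mul_pos ht0 h1t)]
    have hc2 : (t/(1-t))*(1-t)*(ε*t) = t*(ε*t) := by rw [div_mul_cancel₀ t h1t.ne']
    nlinarith [M, hc2]
  -- bound on ∫ u²  where u = F + G - H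
  have Iu2 : ∫ p, (F p + G p - H p)^2 ∂π ≤ (t/(1-t))*ε + ε := by
    have pt3 : ∀ p : X × X, (F p + G p - H p)^2 ≤ F p ^ 2 + 2*(F p * G p) + G p ^ 2 - H p ^ 2 :=
      fun p => by nlinarith [mul_nonneg (hH0 p) (by linarith [htri p] : (0:ℝ) ≤ F p + G p - H p)]
    have hmono : ∫ p, (F p + G p - H p)^2 ∂π
        ≤ ∫ p, (F p ^ 2 + 2*(F p * G p) + G p ^ 2 - H p ^ 2) ∂π :=
      integral_mono iu2i (i2.sub iH2i) pt3
    rw [e1] at hmono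
    nlinarith [hmono, hFG_ub, iF2, iH2, iG2]
  -- bound on ∫ u
  have Iu : ∫ p, (F p + G p - H p) ∂π ≤ (t/(1-t)+1)*η^3 + η/4 := by
    have pt4 : ∀ p : X × X, (F p + G p - H p) ≤ η⁻¹*(F p + G p - H p)^2 + η/4 := by
      intro p
      have hs0 : (0:ℝ) ≤ F p + G p - H p := by linarith [htri p]
      have h1 : (F p + G p - H p)*η ≤ (F p + G p - H p)^2 + η^2/4 := by
        nlinarith [sq_nonneg (2*(F p + G p - H p) - η)]
      have h2 := mul_le_mul_of_nonneg_left h1 (inv_nonneg.mpr hη0.le)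
      have h3 : η⁻¹*((F p + G p - H p)*η) = F p + G p - H p := by field_simp
      have h4 : η⁻¹*((F p + G p - H p)^2 + η^2/4) = η⁻¹*(F p + G p - H p)^2 + η/4 := by
        field_simp
      rw [h3, h4] at h2; exact h2
    have hmono : ∫ p, (F p + G p - H p) ∂π
        ≤ ∫ p, (η⁻¹*(F p + G p - H p)^2 + η/4) ∂π :=
      integral_mono iui ((iu2i.const_mul η⁻¹).add (integrable_const (η/4))) pt4
    have ec : ∫ p, (η⁻¹*(F p + G p - H p)^2 + η/4) ∂π
        = η⁻¹*(∫ p, (F p + G p - H p)^2 ∂π) + η/4 := by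
      have := integral_add (iu2i.const_mul η⁻¹) (integrable_const (μ := π) (η/4))
      rw [this, integral_const_mul, integral_const, probReal_univ]
      simp
    rw [ec] at hmono
    have h6 : η⁻¹*(∫ p, (F p + G p - H p)^2 ∂π) ≤ η⁻¹*((t/(1-t))*ε + ε) :=
      mul_le_mul_of_nonneg_left Iu2 (inv_nonneg.mpr hη0.le)
    have h7 : η⁻¹*((t/(1-t))*ε + ε) = (t/(1-t)+1)*η^3 := by
      rw [hεdef]; field_simp
    linarith [hmono, h6, h7.le, h7.ge]
  -- lower bound on ∫ F H
  have IFH_lb : t^2*W^2 + (t*(1-t)*W^2 - ε/2) - D*((t/(1-t)+1)*η^3 + η/4)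
      ≤ ∫ p, F p * H p ∂π := by
    have pt5 : ∀ p : X × X, F p ^2 + F p * G p - D*(F p + G p - H p) ≤ F p * H p := by
      intro p
      have hq := mul_le_mul_of_nonneg_right (hFD p)
        (by linarith [htri p] : (0:ℝ) ≤ F p + G p - H p)
      nlinarith [hq]
    have hmono : ∫ p, (F p ^2 + F p * G p - D*(F p + G p - H p)) ∂π
        ≤ ∫ p, F p * H p ∂π :=
      integral_mono ((iF2i.add iFGi).sub (iui.const_mul D)) iFHi pt5
    have ed : ∫ p, (F p ^2 + F p * G p - D*(F p + G p - H p)) ∂π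
        = (∫ p, F p ^2 ∂π) + (∫ p, F p * G p ∂π) - D*(∫ p, (F p + G p - H p) ∂π) := by
      have hh1 : ∫ p, (F p ^2 + F p * G p - D*(F p + G p - H p)) ∂π
          = (∫ p, (F p ^2 + F p * G p) ∂π) - ∫ p, D*(F p + G p - H p) ∂π :=
        integral_sub (iF2i.add iFGi) (iui.const_mul D)
      rw [hh1, integral_add iF2i iFGi, integral_const_mul]
    rw [ed] at hmono
    have h9 : D*(∫ p, (F p + G p - H p) ∂π) ≤ D*((t/(1-t)+1)*η^3 + η/4) :=
      mul_le_mul_of_nonneg_left Iu hD0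
    nlinarith [hmono, h9, iF2, hFG_lb]
  -- final bound on ∫ (F - tH)²
  have final_sq : ∫ p, (F p - t*H p)^2 ∂π
      ≤ t*η^4 + 2*t*D*((t/(1-t)+1)*η^3 + η/4) := by
    have e6 : ∫ p, (F p - t*H p)^2 ∂π
        = (∫ p, F p ^2 ∂π) - 2*t*(∫ p, F p * H p ∂π) + t^2*(∫ p, H p ^2 ∂π) := by
      have hpt : (fun p : X × X => (F p - t*H p)^2)
          = fun p => F p ^2 - 2*t*(F p * H p) + t^2*H p ^2 := funext fun p => by ring
      rw [hpt]
      have hh1 : ∫ p, (F p ^2 - 2*t*(F p * H p) + t^2*H p ^2) ∂π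
          = (∫ p, (F p ^2 - 2*t*(F p * H p)) ∂π) + ∫ p, t^2*H p ^2 ∂π :=
        integral_add (iF2i.sub (iFHi.const_mul (2*t))) (iH2i.const_mul (t^2))
      have hh2 : ∫ p, (F p ^2 - 2*t*(F p * H p)) ∂π
          = (∫ p, F p ^2 ∂π) - ∫ p, 2*t*(F p * H p) ∂π :=
        integral_sub iF2i (iFHi.const_mul (2*t))
      rw [hh1, hh2, integral_const_mul, integral_const_mul]
    have h10 := mul_le_mul_of_nonneg_left IFH_lb (by linarith : (0:ℝ) ≤ 2*t)
    rw [e6, iF2, iH2]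
    rw [hεdef] at h10
    nlinarith [h10]
  -- Chebyshev
  have hHr2 : ∀ᵐ p ∂π, ¬ (r₂ ≤ H p) := by
    have hset : MeasurableSet {z : X | r₂ ≤ dist x z} :=
      (isClosed_le continuous_const (continuous_const.dist continuous_id)).measurableSet
    have h0 : π (Prod.snd ⁻¹' {z : X | r₂ ≤ dist x z}) = 0 := by
      rw [hπ.meas_snd hset, hμ₁]
    have := measure_eq_zero_iff_ae_notMem.mp h0
    filter_upwards [this] with p hp
    simpa using hp
  have hsub : {p : X × X | t*r₂ + δ ≤ F p} ≤ᵐ[π] {p : X × X | δ^2 ≤ (F p - t*H p)^2} := by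
    filter_upwards [hHr2] with p hp hmem
    have hH_le : H p ≤ r₂ := (lt_of_not_ge hp).le
    have h1 : δ ≤ F p - t*H p := by
      have h2 : t*H p ≤ t*r₂ := mul_le_mul_of_nonneg_left hH_le ht0.le
      have h3 : t*r₂ + δ ≤ F p := hmem
      linarith
    exact pow_le_pow_left₀ hδ.le h1 2
  have cheb := mul_meas_ge_le_integral_of_nonneg (μ := π)
    (f := fun p => (F p - t*H p)^2)
    (Filter.Eventually.of_forall fun p => sq_nonneg _) iFtH2i (δ^2)
  have hmeasA : MeasurableSet {y : X | t*r₂ + δ ≤ dist x y} :=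
    (isClosed_le continuous_const (continuous_const.dist continuous_id)).measurableSet
  have hmeq : μt {y : X | t*r₂ + δ ≤ dist x y} = π {p : X × X | t*r₂ + δ ≤ F p} :=
    (hπ.meas_fst hmeasA).symm
  have hπmono : π {p : X × X | t*r₂ + δ ≤ F p} ≤ π {p : X × X | δ^2 ≤ (F p - t*H p)^2} :=
    measure_mono_ae hsub
  have hfin : π {p : X × X | δ^2 ≤ (F p - t*H p)^2} ≠ ⊤ := measure_ne_top _ _
  have htoReal : (μt {y : X | t*r₂ + δ ≤ dist x y}).toReal
      ≤ (π {p : X × X | δ^2 ≤ (F p - t*H p)^2}).toReal := by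
    rw [hmeq]
    exact ENNReal.toReal_mono hfin hπmono
  have hδ2 : (0:ℝ) < δ^2 := by positivity
  have hcheb2 : (π {p : X × X | δ^2 ≤ (F p - t*H p)^2}).toReal
      ≤ (∫ p, (F p - t*H p)^2 ∂π) / δ^2 := by
    rw [le_div_iff₀ hδ2]
    calc (π {p : X × X | δ^2 ≤ (F p - t*H p)^2}).toReal * δ^2
        = δ^2 * (π {p : X × X | δ^2 ≤ (F p - t*H p)^2}).toReal := by ring
      _ ≤ ∫ p, (F p - t*H p)^2 ∂π := cheb
  refine le_trans (htoReal.trans hcheb2) ?_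
  exact (div_le_div_iff_of_pos_right hδ2).mpr final_sq

lemma concentration {μt μ₁ : Measure X} [IsProbabilityMeasure μt] [IsProbabilityMeasure μ₁]
    (x : X) (r₂ t : ℝ) (ht0 : 0 < t) (ht1 : t < 1)
    (hWt : W2 (Measure.dirac x) μt = t * W2 (Measure.dirac x) μ₁)
    (hWt1 : W2 μt μ₁ = (1 - t) * W2 (Measure.dirac x) μ₁)
    (hμ₁ : μ₁ {z | r₂ ≤ dist x z} = 0) :
    μt {y | t * r₂ < dist x y} = 0 := by
  have step : ∀ δ : ℝ, 0 < δ → μt {y | t * r₂ + δ ≤ dist x y} = 0 := by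
    intro δ hδ
    have hD0 : 0 ≤ Metric.diam (Set.univ : Set X) := Metric.diam_nonneg
    have key : ∀ n : ℕ, (μt {y | t * r₂ + δ ≤ dist x y}).toReal
        ≤ (t * ((1:ℝ)/(n+1))^4 + 2*t*(Metric.diam (Set.univ : Set X))
            *((t/(1-t)+1)*((1:ℝ)/(n+1))^3 + ((1:ℝ)/(n+1))/4)) / δ^2 := by
      intro n
      refine concentration_step x r₂ t δ ((1:ℝ)/(n+1)) ht0 ht1 hδ (by positivity) ?_ hWt hWt1 hμ₁
      rw [div_le_one (by positivity)]
      linarith [Nat.cast_nonneg (α := ℝ) n]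
    have htend : Tendsto (fun n : ℕ => (t * ((1:ℝ)/(n+1))^4 + 2*t*(Metric.diam (Set.univ : Set X))
          *((t/(1-t)+1)*((1:ℝ)/(n+1))^3 + ((1:ℝ)/(n+1))/4)) / δ^2) atTop (𝓝 0) := by
      have h0 : Tendsto (fun n : ℕ => ((1:ℝ)/(n+1))) atTop (𝓝 0) :=
        tendsto_one_div_add_atTop_nhds_zero_nat
      have hc : Continuous (fun s : ℝ => (t * s^4 + 2*t*(Metric.diam (Set.univ : Set X))
          *((t/(1-t)+1)*s^3 + s/4)) / δ^2) := by
        apply Continuous.div_const; continuity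
      have hf0 : Tendsto (fun s : ℝ => (t * s^4 + 2*t*(Metric.diam (Set.univ : Set X))
          *((t/(1-t)+1)*s^3 + s/4)) / δ^2) (𝓝 0) (𝓝 0) := by
        have h01 := hc.tendsto 0
        norm_num at h01
        exact h01
      exact hf0.comp h0
    have hle := ge_of_tendsto htend (Filter.Eventually.of_forall key)
    have h0' : (μt {y | t * r₂ + δ ≤ dist x y}).toReal = 0 :=
      le_antisymm hle ENNReal.toReal_nonneg
    exact ((ENNReal.toReal_eq_zero_iff _).mp h0').resolve_right (measure_ne_top _ _)
  have hU : {y : X | t * r₂ < dist x y} = ⋃ n : ℕ, {y | t * r₂ + (1:ℝ)/(n+1) ≤ dist x y} := by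
    ext y
    simp only [mem_setOf_eq, mem_iUnion]
    constructor
    · intro h
      obtain ⟨n, hn⟩ := exists_nat_one_div_lt (sub_pos.mpr h)
      exact ⟨n, by linarith⟩
    · rintro ⟨n, hn⟩
      have : 0 < (1:ℝ)/(n+1) := by positivity
      linarith
  rw [hU]
  exact measure_iUnion_null fun n => step _ (by positivity)

lemma dc_neg_rpow (N : ℝ≥0∞) (hfin : N ≠ ∞) (hN1 : 1 ≤ N.toReal) {α : ℝ}
    (hα0 : 0 < α) (hα1 : α < 1) (hβ1 : N.toReal * (1 - α) < 1) :
    DC N (fun ρ => -(ρ ^ α)) := by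
  have hβ0 : 0 < N.toReal * (1 - α) := by nlinarith
  refine ⟨?_, ?_, ?_, ?_⟩
  · refine Continuous.continuousOn ?_
    refine continuous_iff_continuousAt.mpr fun y => ?_
    exact (Real.continuousAt_rpow_const y α (Or.inr hα0.le)).neg
  · exact (Real.strictConcaveOn_rpow hα0 hα1).concaveOn.neg
  · simp [Real.zero_rpow hα0.ne']
  · rw [if_neg hfin]
    show ConvexOn ℝ (Set.Ioi 0) fun l : ℝ => l ^ N.toReal * -((l ^ (-N.toReal)) ^ α)
    have hg : ConvexOn ℝ (Set.Ioi (0:ℝ)) (fun l : ℝ => -(l ^ (N.toReal * (1 - α)))) :=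
      ((Real.strictConcaveOn_rpow hβ0 hβ1).concaveOn.neg).subset
        (Set.Ioi_subset_Ici le_rfl) (convex_Ioi 0)
    have e : ∀ l ∈ Set.Ioi (0:ℝ),
        l ^ N.toReal * -((l ^ (-N.toReal)) ^ α) = -(l ^ (N.toReal * (1 - α))) := by
      intro l hl
      have hl0 : (0:ℝ) < l := hl
      have h1 : (l ^ (-N.toReal)) ^ α = l ^ (-N.toReal * α) :=
        (Real.rpow_mul hl0.le _ _).symm
      rw [h1, mul_neg, ← Real.rpow_add hl0]
      rw [show N.toReal + -N.toReal * α = N.toReal * (1 - α) by ring]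
    refine ⟨convex_Ioi 0, fun a ha b hb w v hw hv hwv => ?_⟩
    have hmem : w • a + v • b ∈ Set.Ioi (0:ℝ) := (convex_Ioi 0) ha hb hw hv hwv
    have h1 := hg.2 ha hb hw hv hwv
    simp only [smul_eq_mul] at h1 hmem ⊢
    rw [e a ha, e b hb, e _ hmem]
    exact h1

lemma uprimeInf_neg_rpow {α : ℝ} (hα1 : α < 1) : UprimeInf (fun ρ => -(ρ ^ α)) = 0 := by
  have h : Tendsto (fun r : ℝ => ((-(r ^ α) / r : ℝ) : EReal)) atTop (𝓝 (0 : EReal)) := by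
    rw [show (0 : EReal) = ((0 : ℝ) : EReal) from rfl, EReal.tendsto_coe]
    have h2 : Tendsto (fun r : ℝ => -(r ^ (α - 1))) atTop (𝓝 (0:ℝ)) := by
      have h3 := (tendsto_rpow_neg_atTop (by linarith : (0:ℝ) < 1 - α)).neg
      rw [neg_zero] at h3
      refine h3.congr fun r => ?_
      rw [show -(1 - α) = α - 1 by ring]
    refine h2.congr' ?_
    filter_upwards [eventually_ge_atTop (1:ℝ)] with r hr
    have hr0 : (0:ℝ) < r := by linarith
    rw [Real.rpow_sub hr0, Real.rpow_one]
    ring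
  exact h.limsup_eq

lemma ent_neg_rpow {Z : Type*} [MeasurableSpace Z] {α : ℝ} (hα0 : 0 < α) (hα1 : α < 1)
    (μ ν : Measure Z) [IsFiniteMeasure μ] [IsProbabilityMeasure ν] :
    ent (fun ρ => -(ρ ^ α)) μ ν
      = -(((∫⁻ y, (μ.rnDeriv ν y) ^ α ∂ν : ℝ≥0∞) : EReal)) := by
  rw [ent, uprimeInf_neg_rpow hα1, zero_mul, add_zero]
  have h1 : ∫⁻ y, ENNReal.ofReal ((fun ρ => -(ρ ^ α)) ((μ.rnDeriv ν y).toReal)) ∂ν = 0 := by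
    have hz : ∀ y : Z, ENNReal.ofReal (-(((μ.rnDeriv ν y).toReal) ^ α)) = 0 := fun y =>
      ENNReal.ofReal_of_nonpos (neg_nonpos.mpr (Real.rpow_nonneg ENNReal.toReal_nonneg α))
    simp only [hz, lintegral_zero]
  have h2 : ∫⁻ y, ENNReal.ofReal (-((fun ρ => -(ρ ^ α)) ((μ.rnDeriv ν y).toReal))) ∂ν
      = ∫⁻ y, (μ.rnDeriv ν y) ^ α ∂ν := by
    simp only [neg_neg]
    refine lintegral_congr_ae ?_
    filter_upwards [Measure.rnDeriv_lt_top μ ν] with y hy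
    rw [← ENNReal.ofReal_rpow_of_nonneg ENNReal.toReal_nonneg hα0.le,
      ENNReal.ofReal_toReal hy.ne]
  rw [h1, h2]
  rw [EReal.coe_ennreal_zero, sub_eq_add_neg, zero_add]

lemma rnDeriv_rpow_le {Z : Type*} [MeasurableSpace Z] {μ ν : Measure Z}
    [IsFiniteMeasure μ] [IsProbabilityMeasure ν] {α : ℝ} (hα0 : 0 < α) (hα1 : α < 1)
    (hμ : μ Set.univ ≤ 1) {S : Set Z} (hS : MeasurableSet S) (hμS : μ Sᶜ = 0) :
    ∫⁻ y, (μ.rnDeriv ν y) ^ α ∂ν ≤ (ν S) ^ (1 - α) := by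
  have hmeas : Measurable (μ.rnDeriv ν) := Measure.measurable_rnDeriv μ ν
  -- rnDeriv vanishes a.e. off S
  have h0 : ∫⁻ y in Sᶜ, μ.rnDeriv ν y ∂ν = 0 :=
    le_antisymm ((Measure.setLIntegral_rnDeriv_le Sᶜ).trans hμS.le) zero_le
  have hae : ∀ᵐ y ∂ν, y ∈ Sᶜ → μ.rnDeriv ν y = 0 :=
    (setLIntegral_eq_zero_iff hS.compl hmeas).mp h0
  have hind : (fun y => (μ.rnDeriv ν y) ^ α)
      =ᵐ[ν] (fun y => (μ.rnDeriv ν y) ^ α * S.indicator (fun _ => (1:ℝ≥0∞)) y) := by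
    filter_upwards [hae] with y hy
    by_cases hyS : y ∈ S
    · rw [Set.indicator_of_mem hyS, mul_one]
    · rw [Set.indicator_of_notMem hyS, mul_zero, hy hyS,
        ENNReal.zero_rpow_of_pos hα0]
  rw [lintegral_congr_ae hind]
  have hpq : Real.HolderConjugate (1/α) (1/(1-α)) := by
    rw [Real.holderConjugate_iff]
    constructor
    · rw [lt_div_iff₀ hα0]; linarith
    · rw [one_div, inv_inv, one_div, inv_inv]; ring
  have hf : AEMeasurable (fun y => (μ.rnDeriv ν y) ^ α) ν :=
    (hmeas.pow_const α).aemeasurable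
  have hg : AEMeasurable (S.indicator (fun _ => (1:ℝ≥0∞))) ν :=
    (measurable_const.indicator hS).aemeasurable
  have hH := ENNReal.lintegral_mul_le_Lp_mul_Lq ν hpq hf hg
  have hfp : ∫⁻ y, ((μ.rnDeriv ν y) ^ α) ^ (1/α) ∂ν = ∫⁻ y, μ.rnDeriv ν y ∂ν := by
    refine lintegral_congr fun y => ?_
    rw [← ENNReal.rpow_mul, mul_one_div_cancel hα0.ne', ENNReal.rpow_one]
  have hgq : ∫⁻ y, (S.indicator (fun _ => (1:ℝ≥0∞)) y) ^ (1/(1-α)) ∂ν = ν S := by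
    have : ∀ y, (S.indicator (fun _ => (1:ℝ≥0∞)) y) ^ (1/(1-α))
        = S.indicator (fun _ => (1:ℝ≥0∞)) y := by
      intro y
      by_cases hyS : y ∈ S
      · rw [Set.indicator_of_mem hyS, ENNReal.one_rpow]
      · rw [Set.indicator_of_notMem hyS,
          ENNReal.zero_rpow_of_pos (one_div_pos.mpr (by linarith))]
    simp only [this]
    exact lintegral_indicator_one hS
  rw [hfp, hgq] at hH
  have hone : (∫⁻ y, μ.rnDeriv ν y ∂ν) ^ (1/(1/α)) ≤ 1 := by
    rw [one_div_one_div]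
    exact ENNReal.rpow_le_one (Measure.lintegral_rnDeriv_le.trans hμ) hα0.le
  calc ∫⁻ y, (μ.rnDeriv ν y) ^ α * S.indicator (fun _ => (1:ℝ≥0∞)) y ∂ν
      ≤ (∫⁻ y, μ.rnDeriv ν y ∂ν) ^ (1/(1/α)) * (ν S) ^ (1/(1/(1-α))) := hH
    _ ≤ 1 * (ν S) ^ (1/(1/(1-α))) :=
        mul_le_mul_left hone _
    _ = (ν S) ^ (1-α) := by rw [one_mul, one_div_one_div]

lemma rnDeriv_rpow_restrict {Z : Type*} [MeasurableSpace Z] {B : Set Z} (hB : MeasurableSet B)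
    (ν : Measure Z) [IsProbabilityMeasure ν] (hm0 : ν B ≠ 0) {α : ℝ}
    (hα0 : 0 < α) (hα1 : α < 1) :
    ∫⁻ y, (((ν B)⁻¹ • ν.restrict B).rnDeriv ν y) ^ α ∂ν = (ν B) ^ (1 - α) := by
  have hmne : ν B ≠ ⊤ := measure_ne_top ν B
  have h1 : ((ν B)⁻¹ • ν.restrict B).rnDeriv ν =ᵐ[ν] (ν B)⁻¹ • (ν.restrict B).rnDeriv ν :=
    Measure.rnDeriv_smul_left_of_ne_top (ν.restrict B) ν
      (by simp [ENNReal.inv_ne_top, hm0])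
  have h2 : (ν.restrict B).rnDeriv ν =ᵐ[ν] B.indicator 1 :=
    Measure.rnDeriv_restrict_self ν hB
  have h3 : ∫⁻ y, (((ν B)⁻¹ • ν.restrict B).rnDeriv ν y) ^ α ∂ν
      = ∫⁻ y, ((ν B)⁻¹ * B.indicator (fun _ => (1:ℝ≥0∞)) y) ^ α ∂ν := by
    refine lintegral_congr_ae ?_
    filter_upwards [h1, h2] with y hy1 hy2
    rw [hy1]
    simp only [Pi.smul_apply, smul_eq_mul]
    rw [hy2]
    rfl
  rw [h3]
  have h4 : ∀ y, ((ν B)⁻¹ * B.indicator (fun _ => (1:ℝ≥0∞)) y) ^ α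
      = B.indicator (fun _ => ((ν B)⁻¹) ^ α) y := by
    intro y
    by_cases hyB : y ∈ B
    · rw [Set.indicator_of_mem hyB, Set.indicator_of_mem hyB, mul_one]
    · rw [Set.indicator_of_notMem hyB, Set.indicator_of_notMem hyB, mul_zero,
        ENNReal.zero_rpow_of_pos hα0]
  simp only [h4]
  rw [lintegral_indicator hB, setLIntegral_const]
  rw [ENNReal.inv_rpow, ← ENNReal.rpow_neg]
  rw [show (1:ℝ) - α = -α + 1 by ring, ENNReal.rpow_add _ _ hm0 hmne, ENNReal.rpow_one]

lemma isOpen_compl_mSupp (ν : Measure X) : IsOpen (mSupp ν)ᶜ := by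
  rw [Metric.isOpen_iff]
  intro y hy
  simp only [mSupp, mem_compl_iff, mem_setOf_eq, not_forall] at hy
  obtain ⟨r, hr, hν⟩ := hy
  push_neg at hν
  refine ⟨r/2, by linarith, fun z hz => ?_⟩
  simp only [mSupp, mem_compl_iff, mem_setOf_eq, not_forall]
  refine ⟨r/2, by linarith, ?_⟩
  push_neg
  have hsub : Metric.ball z (r/2) ⊆ Metric.ball y r := by
    intro w hw
    rw [Metric.mem_ball] at *
    have := Metric.mem_ball.mp hz
    calc dist w y ≤ dist w z + dist z y := dist_triangle _ _ _
      _ < r/2 + r/2 := add_lt_add hw this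
      _ = r := by ring
  exact le_trans (measure_mono hsub) hν

lemma measure_compl_mSupp (ν : Measure X) [IsProbabilityMeasure ν] : ν (mSupp ν)ᶜ = 0 := by
  set S : Set (Set X) := {U | IsOpen U ∧ ν U = 0} with hS
  have hcov : (mSupp ν)ᶜ ⊆ ⋃₀ S := by
    intro y hy
    simp only [mSupp, mem_compl_iff, mem_setOf_eq, not_forall] at hy
    obtain ⟨r, hr, hν⟩ := hy
    push_neg at hν
    exact ⟨Metric.ball y r, ⟨Metric.isOpen_ball, le_antisymm hν zero_le⟩,
      Metric.mem_ball_self hr⟩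
  obtain ⟨T, hTc, hTS, hT⟩ := TopologicalSpace.isOpen_sUnion_countable S fun U hU => hU.1
  have hT0 : ν (⋃₀ T) = 0 := by
    rw [measure_sUnion_null_iff hTc]
    exact fun U hU => (hTS hU).2
  exact le_antisymm (le_trans (measure_mono (hcov.trans hT.ge)) hT0.le) zero_le

lemma dirac_compl_mSupp (ν : Measure X) {x : X} (hx : x ∈ mSupp ν) :
    Measure.dirac x (mSupp ν)ᶜ = 0 := by
  rw [Measure.dirac_apply' x (isOpen_compl_mSupp ν).measurableSet]
  simp [hx]

lemma transfer {t : ℝ} (ht0 : 0 ≤ t) (ht1 : t ≤ 1) {A B C : ℝ≥0∞}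
    (hA : A ≠ ⊤) (hB : B ≠ ⊤) (hC : C ≠ ⊤)
    (h : -((A : EReal)) ≤ ((t : ℝ) : EReal) * (-((B : EReal)))
      + ((1 - t : ℝ) : EReal) * (-((C : EReal)))) :
    ENNReal.ofReal t * B ≤ A := by
  have coe_fin : ∀ (x : ℝ≥0∞), x ≠ ⊤ → (x : EReal) = ((x.toReal : ℝ) : EReal) := by
    intro x hx
    lift x to ℝ≥0 using hx
    rw [EReal.coe_nnreal_eq_coe_real]
    simp
  rw [coe_fin A hA, coe_fin B hB, coe_fin C hC] at h
  rw [← EReal.coe_neg, ← EReal.coe_neg, ← EReal.coe_neg, ← EReal.coe_mul, ← EReal.coe_mul,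
    ← EReal.coe_add, EReal.coe_le_coe_iff] at h
  have hreal : t * B.toReal ≤ A.toReal := by nlinarith [ENNReal.toReal_nonneg (a := C)]
  calc ENNReal.ofReal t * B = ENNReal.ofReal t * ENNReal.ofReal B.toReal := by
        rw [ENNReal.ofReal_toReal hB]
    _ = ENNReal.ofReal (t * B.toReal) := (ENNReal.ofReal_mul ht0).symm
    _ ≤ ENNReal.ofReal A.toReal := ENNReal.ofReal_le_ofReal hreal
    _ = A := ENNReal.ofReal_toReal hA


/-- Bishop–Gromov inequality: if a compact measured length space `(X,d,ν)` has nonnegative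
`N`-Ricci curvature with `N ∈ [1,∞)`, then for all `x ∈ supp ν` and `0 < r₁ ≤ r₂`,
`ν(B_{r₂}(x)) ≤ (r₂/r₁)^N ν(B_{r₁}(x))`. -/
theorem stmt12 (N : ℝ≥0∞) (h1 : 1 ≤ N) (hfin : N ≠ ∞)
    (hX : GeodesicMetricSpace X) (ν : Measure X) [IsProbabilityMeasure ν]
    (hRic : NonnegRicci N ν) (x : X) (hx : x ∈ mSupp ν)
    (r₁ r₂ : ℝ) (hr₁ : 0 < r₁) (hr : r₁ ≤ r₂) :
    ν (Metric.ball x r₂) ≤ ENNReal.ofReal ((r₂ / r₁) ^ N.toReal) * ν (Metric.ball x r₁) := by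
  have hr₂ : 0 < r₂ := lt_of_lt_of_le hr₁ hr
  have hN1 : 1 ≤ N.toReal := by
    have := ENNReal.toReal_mono hfin h1
    simpa using this
  -- main estimate for auxiliary parameters M > N and r₁' < r₁
  have main : ∀ M : ℝ, N.toReal < M → ∀ r₁' : ℝ, 0 < r₁' → r₁' < r₁ →
      ν (Metric.ball x r₂) ≤ ENNReal.ofReal ((r₂ / r₁') ^ M) * ν (Metric.ball x r₁) := by
    intro M hM r₁' hr₁'0 hr₁'
    have hM1 : 1 < M := lt_of_le_of_lt hN1 hM
    have hM0 : (0:ℝ) < M := by linarith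
    set α : ℝ := 1 - 1/M with hαdef
    have h1M : 0 < 1/M := by positivity
    have h1M1 : 1/M < 1 := by rw [div_lt_one hM0]; linarith
    have hα0 : 0 < α := by rw [hαdef]; linarith
    have hα1 : α < 1 := by rw [hαdef]; linarith
    have h1α : 1 - α = 1/M := by rw [hαdef]; ring
    have hβ1 : N.toReal * (1 - α) < 1 := by
      rw [h1α, mul_one_div, div_lt_one hM0]; exact hM
    set B₂ := Metric.ball x r₂ with hB₂
    set m₂ := ν B₂ with hm₂
    have hm₂0 : m₂ ≠ 0 := (hx r₂ hr₂).ne'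
    have hm₂top : m₂ ≠ ⊤ := measure_ne_top ν B₂
    have hprob1 : IsProbabilityMeasure (m₂⁻¹ • ν.restrict B₂) := by
      constructor
      rw [Measure.smul_apply, Measure.restrict_apply_univ, smul_eq_mul]
      exact ENNReal.inv_mul_cancel hm₂0 hm₂top
    set μ₀p : ProbabilityMeasure X := ⟨Measure.dirac x, inferInstance⟩ with hμ₀p
    set μ₁p : ProbabilityMeasure X := ⟨m₂⁻¹ • ν.restrict B₂, hprob1⟩ with hμ₁p
    have hcoe₀ : (μ₀p : Measure X) = Measure.dirac x := rfl
    have hcoe₁ : (μ₁p : Measure X) = m₂⁻¹ • ν.restrict B₂ := rfl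
    have hs₀ : (μ₀p : Measure X) (mSupp ν)ᶜ = 0 := dirac_compl_mSupp ν hx
    have hs₁ : (μ₁p : Measure X) (mSupp ν)ᶜ = 0 := by
      rw [hcoe₁, Measure.smul_apply,
        Measure.restrict_apply (isOpen_compl_mSupp ν).measurableSet]
      have hz : ν ((mSupp ν)ᶜ ∩ B₂) = 0 :=
        le_antisymm (le_trans (measure_mono Set.inter_subset_left)
          (measure_compl_mSupp ν).le) zero_le
      rw [hz, smul_eq_mul, mul_zero]
    obtain ⟨Γ, hgeo, hconv⟩ := hRic μ₀p μ₁p hs₀ hs₁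
    set t : ℝ := r₁'/r₂ with htdef
    have ht0 : 0 < t := by positivity
    have ht1 : t < 1 := by rw [htdef, div_lt_one hr₂]; linarith
    have htr₂ : t * r₂ = r₁' := div_mul_cancel₀ _ hr₂.ne'
    have h0mem : (0:ℝ) ∈ Set.Icc (0:ℝ) 1 := by constructor <;> norm_num
    have h1mem : (1:ℝ) ∈ Set.Icc (0:ℝ) 1 := by constructor <;> norm_num
    have htmem : t ∈ Set.Icc (0:ℝ) 1 := ⟨ht0.le, ht1.le⟩
    have hW0t := hgeo.2.2 0 h0mem t htmem
    have hWt1 := hgeo.2.2 t htmem 1 h1mem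
    rw [hgeo.1] at hW0t
    rw [hgeo.2.1] at hWt1
    rw [hcoe₀, hcoe₁, show |0 - t| = t by rw [zero_sub, abs_neg, abs_of_pos ht0]] at hW0t
    rw [hcoe₀, hcoe₁, show |t - 1| = 1 - t by
      rw [abs_of_nonpos (by linarith), neg_sub]] at hWt1
    haveI hΓt : IsProbabilityMeasure ((Γ t : Measure X)) := (Γ t).2
    -- the ball condition for μ₁
    have hμ₁ball : (m₂⁻¹ • ν.restrict B₂) {z | r₂ ≤ dist x z} = 0 := by
      have hempty : {z : X | r₂ ≤ dist x z} ∩ B₂ = ∅ := by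
        ext z
        simp only [Set.mem_inter_iff, Set.mem_setOf_eq, hB₂, Metric.mem_ball,
          Set.mem_empty_iff_false, iff_false, not_and]
        intro h2 h3
        rw [dist_comm] at h3
        linarith
      have hms : MeasurableSet {z : X | r₂ ≤ dist x z} :=
        measurableSet_le measurable_const (by fun_prop)
      rw [Measure.smul_apply, Measure.restrict_apply hms,
        hempty, measure_empty, smul_eq_mul, mul_zero]
    have hconc := concentration (μt := (Γ t : Measure X)) (μ₁ := m₂⁻¹ • ν.restrict B₂)
      x r₂ t ht0 ht1 hW0t hWt1 hμ₁ball
    have hconc' : (Γ t : Measure X) (Metric.closedBall x r₁')ᶜ = 0 := by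
      have hseteq : (Metric.closedBall x r₁')ᶜ = {y | t*r₂ < dist x y} := by
        ext y
        simp only [Set.mem_compl_iff, Metric.mem_closedBall, not_le, Set.mem_setOf_eq, htr₂]
        rw [dist_comm]
      rw [hseteq]
      exact hconc
    -- entropy inequality
    have hUdc : DC N (fun ρ => -(ρ ^ α)) := dc_neg_rpow N hfin hN1 hα0 hα1 hβ1
    have hent := hconv _ hUdc t htmem
    rw [ent_neg_rpow hα0 hα1 _ ν, ent_neg_rpow hα0 hα1 _ ν, ent_neg_rpow hα0 hα1 _ ν] at hent
    -- bounds for the three integrals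
    have hJt_le : ∫⁻ y, ((Γ t : Measure X).rnDeriv ν y) ^ α ∂ν
        ≤ (ν (Metric.closedBall x r₁')) ^ (1 - α) :=
      rnDeriv_rpow_le hα0 hα1 measure_univ.le Metric.isClosed_closedBall.measurableSet hconc'
    have hJ₁_eq : ∫⁻ y, (((μ₁p : Measure X)).rnDeriv ν y) ^ α ∂ν = m₂ ^ (1 - α) := by
      rw [hcoe₁]
      exact rnDeriv_rpow_restrict Metric.isOpen_ball.measurableSet ν hm₂0 hα0 hα1
    have hJ₀_le : ∫⁻ y, (((μ₀p : Measure X)).rnDeriv ν y) ^ α ∂ν ≤ 1 := by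
      have h := rnDeriv_rpow_le (μ := (μ₀p : Measure X)) (ν := ν) hα0 hα1
        measure_univ.le MeasurableSet.univ (by simp)
      simpa using h
    have hJtne : (∫⁻ y, ((Γ t : Measure X).rnDeriv ν y) ^ α ∂ν) ≠ ⊤ :=
      ne_top_of_le_ne_top
        (ENNReal.rpow_ne_top_of_nonneg (by linarith) (measure_ne_top _ _)) hJt_le
    have hJ₁ne : (∫⁻ y, (((μ₁p : Measure X)).rnDeriv ν y) ^ α ∂ν) ≠ ⊤ := by
      rw [hJ₁_eq]
      exact ENNReal.rpow_ne_top_of_nonneg (by linarith) hm₂top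
    have hJ₀ne : (∫⁻ y, (((μ₀p : Measure X)).rnDeriv ν y) ^ α ∂ν) ≠ ⊤ :=
      ne_top_of_le_ne_top ENNReal.one_ne_top hJ₀_le
    have htrans := transfer ht0.le ht1.le hJtne hJ₁ne hJ₀ne hent
    -- combine
    have hsub : Metric.closedBall x r₁' ⊆ Metric.ball x r₁ :=
      Metric.closedBall_subset_ball hr₁'
    have hchain : ENNReal.ofReal t * m₂ ^ (1/M) ≤ (ν (Metric.ball x r₁)) ^ (1/M) := by
      rw [← h1α, ← hJ₁_eq]
      refine le_trans htrans (le_trans hJt_le ?_)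
      exact ENNReal.rpow_le_rpow (measure_mono hsub) (by linarith)
    have hpow := ENNReal.rpow_le_rpow hchain hM0.le
    rw [ENNReal.mul_rpow_of_nonneg _ _ hM0.le, ← ENNReal.rpow_mul, ← ENNReal.rpow_mul,
      one_div_mul_cancel hM0.ne', ENNReal.rpow_one, ENNReal.rpow_one,
      ENNReal.ofReal_rpow_of_pos ht0] at hpow
    have hid : ENNReal.ofReal ((r₂/r₁') ^ M) * ENNReal.ofReal (t ^ M) = 1 := by
      rw [← ENNReal.ofReal_mul (by positivity), ← Real.mul_rpow (by positivity) ht0.le,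
        show (r₂/r₁') * t = 1 by rw [htdef]; field_simp]
      simp [Real.one_rpow]
    calc ν (Metric.ball x r₂) = m₂ := rfl
      _ = ENNReal.ofReal ((r₂/r₁') ^ M) * (ENNReal.ofReal (t ^ M) * m₂) := by
          rw [← mul_assoc, hid, one_mul]
      _ ≤ ENNReal.ofReal ((r₂/r₁') ^ M) * ν (Metric.ball x r₁) :=
          mul_le_mul_right hpow _
  -- pass to the limit M → N.toReal, r₁' → r₁
  set L := ν (Metric.ball x r₁) with hL
  have hLtop : L ≠ ⊤ := measure_ne_top _ _
  have hseq : ∀ n : ℕ, ν (Metric.ball x r₂)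
      ≤ ENNReal.ofReal ((r₂ / (r₁ - r₁/((n:ℝ)+2))) ^ (N.toReal + 1/((n:ℝ)+1))) * L := by
    intro n
    have h2pos : (0:ℝ) < (n:ℝ)+2 := by positivity
    refine main _ (lt_add_of_pos_right _ (by positivity)) _ ?_ ?_
    · have : r₁/((n:ℝ)+2) < r₁ := div_lt_self hr₁ (by linarith)
      linarith
    · have : (0:ℝ) < r₁/((n:ℝ)+2) := by positivity
      linarith
  have h1 : Tendsto (fun n : ℕ => 1/((n:ℝ)+1)) atTop (𝓝 0) :=
    tendsto_one_div_add_atTop_nhds_zero_nat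
  have h3 : Tendsto (fun n : ℕ => 1/((n:ℝ)+2)) atTop (𝓝 0) := by
    have h4 := h1.comp (tendsto_add_atTop_nat 1)
    refine h4.congr fun n => ?_
    simp only [Function.comp_apply]
    push_cast
    ring_nf
  have h2 : Tendsto (fun n : ℕ => r₁/((n:ℝ)+2)) atTop (𝓝 0) := by
    have h5 := h3.const_mul r₁
    rw [mul_zero] at h5
    refine h5.congr fun n => ?_
    ring
  have hden : Tendsto (fun n : ℕ => r₁ - r₁/((n:ℝ)+2)) atTop (𝓝 r₁) := by
    have h6 := h2.const_sub r₁
    simpa using h6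
  have hbase : Tendsto (fun n : ℕ => r₂ / (r₁ - r₁/((n:ℝ)+2))) atTop (𝓝 (r₂/r₁)) :=
    tendsto_const_nhds.div hden hr₁.ne'
  have hexp : Tendsto (fun n : ℕ => N.toReal + 1/((n:ℝ)+1)) atTop (𝓝 N.toReal) := by
    have h7 := h1.const_add N.toReal
    simpa using h7
  have hrpow : Tendsto (fun n : ℕ => (r₂ / (r₁ - r₁/((n:ℝ)+2))) ^ (N.toReal + 1/((n:ℝ)+1)))
      atTop (𝓝 ((r₂/r₁) ^ N.toReal)) :=
    hbase.rpow hexp (Or.inl (by positivity))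
  have htend : Tendsto (fun n : ℕ =>
      ENNReal.ofReal ((r₂ / (r₁ - r₁/((n:ℝ)+2))) ^ (N.toReal + 1/((n:ℝ)+1))) * L) atTop
      (𝓝 (ENNReal.ofReal ((r₂/r₁) ^ N.toReal) * L)) :=
    ENNReal.Tendsto.mul_const (ENNReal.tendsto_ofReal hrpow) (Or.inr hLtop)
  exact ge_of_tendsto htend (Filter.Eventually.of_forall hseq)
end
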